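/- In a SPAO GRAPE instance, suppose a Nash stable partition Π is established on agent set A, and a new agent a_r with SPAO preferences joins, choosing its most preferred task-coalition pair. Then the enlarged instance with agent set A ∪ {a_r} is still SPAO, admits a Nash stable partition, and greedy unilateral deviations re-converge to a Nash stable partition within at most |A|+1 iterations. -/

import Mathlib

def coalSize {A τ : Type*} [Fintype A] [DecidableEq τ] (π : A → τ) (j : τ) : ℕ :=
  (Finset.univ.filter fun k => π k = j).card

def joinSize {A τ : Type*} [Fintype A] [DecidableEq τ] (π : A → τ) (i : A) (j : τ) : ℕ :=
  if π i = j then coalSize π j else coalSize π j + 1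

def NashStable {A τ : Type*} [Fintype A] [DecidableEq τ]
    (R : A → τ × ℕ → τ × ℕ → Prop) (π : A → τ) : Prop :=
  ∀ (i : A) (j : τ), R i (π i, coalSize π (π i)) (j, joinSize π i j)

def SPrefers {A τ : Type*} (R : A → τ × ℕ → τ × ℕ → Prop) (i : A) (x y : τ × ℕ) : Prop :=
  R i x y ∧ ¬ R i y x

def GreedyStep {A τ : Type*} [Fintype A] [DecidableEq A] [DecidableEq τ]
    (R : A → τ × ℕ → τ × ℕ → Prop) (π π' : A → τ) : Prop :=
  ∃ (i : A) (j : τ),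
    SPrefers R i (j, joinSize π i j) (π i, coalSize π (π i)) ∧
    (∀ j' : τ, R i (j, joinSize π i j) (j', joinSize π i j')) ∧
    π' = Function.update π i j

/-! Once the newcomer has joined, coalition sizes exceed the Nash-stable baseline by one at a
single task. Only members of that crowded coalition can want to move. A greedy move to a best
response shifts the surplus to the target task, and the mover, who prefers its new seat even at
the crowded size, never wants to move again. So every deviation settles one more agent, and the
dynamics stop after at most `|A| + 1` deviations. -/

open Function

section

variable {ι τ : Type*}

lemma exists_forall_rel_of_total [Finite τ] [Nonempty τ] {X : Type*} {r : X → X → Prop}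
    (htotal : ∀ x y, r x y ∨ r y x) (htrans : Transitive r) (f : τ → X) :
    ∃ j, ∀ j', r (f j) (f j') := by
  let better : τ → τ → Prop := fun a b => ¬ r (f b) (f a)
  have : IsTrans τ better :=
    ⟨fun _ _ _ hab hbc hca => hbc (htrans hca ((htotal _ _).resolve_left hab))⟩
  have : Std.Irrefl better := ⟨fun _ h => h ((htotal _ _).elim id id)⟩
  obtain ⟨j, -, hj⟩ :=
    (Finite.wellFounded_of_trans_of_irrefl better).has_min Set.univ Set.univ_nonempty
  exact ⟨j, fun j' => not_not.mp (hj j' trivial)⟩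

lemma rel_of_le {R : ι → τ × ℕ → τ × ℕ → Prop} (htotal : ∀ i x y, R i x y ∨ R i y x)
    (hSPAO : ∀ i t p q, p < q → R i (t, p) (t, q)) {i : ι} {t : τ} {p q : ℕ} (h : p ≤ q) :
    R i (t, p) (t, q) := by
  rcases h.lt_or_eq with h | rfl
  · exact hSPAO i t p q h
  · exact (htotal i _ _).elim id id

section Partitions

variable [Fintype ι] [DecidableEq τ] {R : ι → τ × ℕ → τ × ℕ → Prop}

lemma coalSize_update_add [DecidableEq ι] (π : ι → τ) (i : ι) (j k : τ) :
    coalSize (update π i j) k + (if k = π i then 1 else 0) =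
      coalSize π k + if k = j then 1 else 0 := by
  simp only [coalSize, Finset.card_filter, Fintype.sum_eq_add_sum_compl i, update_self,
    eq_comm (b := k)]
  have hrest : ∑ x ∈ {i}ᶜ, (if k = update π i j x then 1 else 0) =
      ∑ x ∈ {i}ᶜ, (if k = π x then 1 else 0) :=
    Finset.sum_congr rfl fun x hx => by
      rw [update_of_ne (by simpa using hx)]
  omega

lemma coalSize_optionElim (π : ι → τ) (c k : τ) :
    coalSize (fun x : Option ι => x.elim c π) k = coalSize π k + if k = c then 1 else 0 := by
  rw [coalSize, coalSize, Finset.card_filter, Finset.card_filter, Fintype.sum_option, add_comm]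
  exact congrArg _ (if_congr eq_comm rfl rfl)

lemma joinSize_self (π : ι → τ) (i : ι) : joinSize π i (π i) = coalSize π (π i) :=
  if_pos rfl

lemma joinSize_of_ne {π : ι → τ} {i : ι} {j : τ} (h : π i ≠ j) :
    joinSize π i j = coalSize π j + 1 :=
  if_neg h

lemma NashStable.rel_succ (hSPAO : ∀ i t p q, p < q → R i (t, p) (t, q)) {π : ι → τ}
    (h : NashStable R π) (i : ι) (j : τ) : R i (π i, coalSize π (π i)) (j, coalSize π j + 1) := by
  by_cases hj : π i = j
  · subst hj
    exact hSPAO i _ _ _ (lt_add_one _)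
  · simpa only [joinSize_of_ne hj] using h i j

lemma rel_joinSize_of_rel_succ (htotal : ∀ i x y, R i x y ∨ R i y x)
    (htrans : ∀ i, Transitive (R i)) (hSPAO : ∀ i t p q, p < q → R i (t, p) (t, q))
    {π : ι → τ} {i : ι} {N : τ → ℕ} (hN : ∀ j, N j ≤ coalSize π j)
    (h : ∀ j, R i (π i, coalSize π (π i)) (j, N j + 1)) (j : τ) :
    R i (π i, coalSize π (π i)) (j, joinSize π i j) := by
  by_cases hj : π i = j
  · subst hj
    rw [joinSize_self]
    exact (htotal i _ _).elim id id
  · rw [joinSize_of_ne hj]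
    exact htrans i (h j) (rel_of_le htotal hSPAO (Nat.add_le_add_right (hN j) 1))

def GreedyRun [DecidableEq ι] (R : ι → τ × ℕ → τ × ℕ → Prop) (seq : ℕ → ι → τ) : Prop :=
  ∀ k, (¬ NashStable R (seq k) → GreedyStep R (seq k) (seq (k + 1))) ∧
    (NashStable R (seq k) → seq (k + 1) = seq k)

/-- `N` are baseline coalition sizes, `c` is the one crowded task and `L` the settled agents. -/
structure DeviationInvariant (R : ι → τ × ℕ → τ × ℕ → Prop) (N : τ → ℕ) (c : τ) (π : ι → τ)
    (L : Finset ι) : Prop where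
  coalSize_eq : ∀ j, coalSize π j = N j + if j = c then 1 else 0
  rel_base : ∀ i j, R i (π i, N (π i)) (j, N j + 1)
  rel_settled : ∀ i ∈ L, ∀ j, R i (π i, N (π i) + 1) (j, N j + 1)

namespace DeviationInvariant

variable {N : τ → ℕ} {c : τ} {π : ι → τ} {L : Finset ι}

lemma rel_joinSize (htotal : ∀ i x y, R i x y ∨ R i y x) (htrans : ∀ i, Transitive (R i))
    (hSPAO : ∀ i t p q, p < q → R i (t, p) (t, q)) (hI : DeviationInvariant R N c π L) {i : ι}
    (hi : π i ≠ c ∨ i ∈ L) (j : τ) : R i (π i, coalSize π (π i)) (j, joinSize π i j) := by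
  refine rel_joinSize_of_rel_succ htotal htrans hSPAO (N := N) (fun j => ?_) (fun j => ?_) j
  · rw [hI.coalSize_eq]
    omega
  · rcases hi with hc | hL
    · simpa only [hI.coalSize_eq, if_neg hc, add_zero] using hI.rel_base i j
    · refine htrans i (rel_of_le htotal hSPAO ?_) (hI.rel_settled i hL j)
      rw [hI.coalSize_eq]
      split_ifs <;> omega

lemma joinSize_eq (hI : DeviationInvariant R N c π L) {i : ι} (hi : π i = c) (j : τ) :
    joinSize π i j = N j + 1 := by
  by_cases hj : π i = j
  · rw [← hj, joinSize_self, hI.coalSize_eq, if_pos hi]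
  · rw [joinSize_of_ne hj, hI.coalSize_eq, if_neg fun h => hj (hi.trans h.symm)]

lemma greedyStep [DecidableEq ι] (htotal : ∀ i x y, R i x y ∨ R i y x)
    (htrans : ∀ i, Transitive (R i)) (hSPAO : ∀ i t p q, p < q → R i (t, p) (t, q))
    (hI : DeviationInvariant R N c π L) {π' : ι → τ} (hstep : GreedyStep R π π') :
    ∃ c' L', DeviationInvariant R N c' π' L' ∧ L.card < L'.card := by
  obtain ⟨i, j, hpref, hbr, rfl⟩ := hstep
  obtain ⟨hic, hiL⟩ : π i = c ∧ i ∉ L := by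
    by_contra! h
    exact hpref.2 (hI.rel_joinSize htotal htrans hSPAO (not_or_of_imp h) j)
  have hij : π i ≠ j := by
    rintro rfl
    rw [joinSize_self] at hpref
    exact hpref.2 hpref.1
  have hbest : ∀ j', R i (j, N j + 1) (j', N j' + 1) := fun j' => by
    simpa only [hI.joinSize_eq hic] using hbr j'
  refine ⟨j, insert i L, ⟨fun k => ?_, fun a k => ?_, fun a ha k => ?_⟩,
    Finset.card_lt_card (Finset.ssubset_insert hiL)⟩
  · have hmove := coalSize_update_add π i j k
    rw [hI.coalSize_eq, hic] at hmove
    split_ifs at hmove ⊢ <;> omega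
  · rcases eq_or_ne a i with rfl | ha
    · rw [update_self]
      exact htrans a (hSPAO a j _ _ (lt_add_one _)) (hbest k)
    · rw [update_of_ne ha]
      exact hI.rel_base a k
  · rcases eq_or_ne a i with rfl | hai
    · rw [update_self]
      exact hbest k
    · rw [update_of_ne hai]
      exact hI.rel_settled a ((Finset.mem_insert.mp ha).resolve_left hai) k

lemma nashStable_or_exists_of_greedyRun [DecidableEq ι] (htotal : ∀ i x y, R i x y ∨ R i y x)
    (htrans : ∀ i, Transitive (R i)) (hSPAO : ∀ i t p q, p < q → R i (t, p) (t, q))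
    {seq : ℕ → ι → τ} (hrun : GreedyRun R seq) (hI : DeviationInvariant R N c (seq 0) L) :
    ∀ k, NashStable R (seq k) ∨
      ∃ c' L', DeviationInvariant R N c' (seq k) L' ∧ L.card + k ≤ L'.card
  | 0 => .inr ⟨c, L, hI, le_rfl⟩
  | k + 1 => by
    rcases nashStable_or_exists_of_greedyRun htotal htrans hSPAO hrun hI k with
      hstable | ⟨c', L', hI', hcard⟩
    · exact .inl ((hrun k).2 hstable ▸ hstable)
    · by_cases hstable : NashStable R (seq k)
      · exact .inl ((hrun k).2 hstable ▸ hstable)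
      · obtain ⟨c'', L'', hI'', hlt⟩ := hI'.greedyStep htotal htrans hSPAO ((hrun k).1 hstable)
        exact .inr ⟨c'', L'', hI'', by omega⟩

lemma nashStable_of_greedyRun [DecidableEq ι] (htotal : ∀ i x y, R i x y ∨ R i y x)
    (htrans : ∀ i, Transitive (R i)) (hSPAO : ∀ i t p q, p < q → R i (t, p) (t, q))
    {seq : ℕ → ι → τ} (hrun : GreedyRun R seq) (hI : DeviationInvariant R N c (seq 0) L)
    {k : ℕ} (hk : Fintype.card ι ≤ L.card + k) : NashStable R (seq k) := by
  rcases nashStable_or_exists_of_greedyRun htotal htrans hSPAO hrun hI k with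
    hstable | ⟨_, L', hI', hcard⟩
  · exact hstable
  · by_contra hstable
    obtain ⟨_, L'', _, hlt⟩ := hI'.greedyStep htotal htrans hSPAO ((hrun k).1 hstable)
    have := L''.card_le_univ
    omega

end DeviationInvariant

lemma exists_greedyStep [DecidableEq ι] [Fintype τ] (htotal : ∀ i x y, R i x y ∨ R i y x)
    (htrans : ∀ i, Transitive (R i)) {π : ι → τ} (h : ¬ NashStable R π) :
    ∃ π', GreedyStep R π π' := by
  obtain ⟨i, j₀, hj₀⟩ : ∃ i j, ¬ R i (π i, coalSize π (π i)) (j, joinSize π i j) := by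
    simpa only [NashStable, not_forall] using h
  have : Nonempty τ := ⟨j₀⟩
  obtain ⟨j, hj⟩ := exists_forall_rel_of_total (htotal i) (htrans i) fun j => (j, joinSize π i j)
  have hbetter := htrans i (hj j₀) ((htotal i _ _).resolve_left hj₀)
  exact ⟨update π i j, i, j, ⟨hbetter, fun h => hj₀ (htrans i h (hj j₀))⟩, hj, rfl⟩

lemma exists_greedyRun [DecidableEq ι] [Fintype τ] (htotal : ∀ i x y, R i x y ∨ R i y x)
    (htrans : ∀ i, Transitive (R i)) (π₀ : ι → τ) : ∃ seq, seq 0 = π₀ ∧ GreedyRun R seq := by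
  classical
  let next : (ι → τ) → ι → τ := fun π =>
    if h : NashStable R π then π else (exists_greedyStep htotal htrans h).choose
  refine ⟨fun k => next^[k] π₀, rfl, fun k => ⟨fun h => ?_, fun h => ?_⟩⟩
  · simpa only [iterate_succ_apply', next, dif_neg h] using
      (exists_greedyStep htotal htrans h).choose_spec
  · simp only [iterate_succ_apply', next, dif_pos h]

end Partitions

lemma NashStable.deviationInvariant_optionElim [Fintype ι] [DecidableEq τ]
    {R : Option ι → τ × ℕ → τ × ℕ → Prop} (htrans : ∀ i, Transitive (R i))
    (hSPAO : ∀ i t p q, p < q → R i (t, p) (t, q)) {π₀ : ι → τ}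
    (hπ₀ : NashStable (fun a => R (some a)) π₀) {c : τ}
    (hc : ∀ j, R none (c, coalSize π₀ c + 1) (j, coalSize π₀ j + 1)) :
    DeviationInvariant R (coalSize π₀) c (fun x => x.elim c π₀) {none} where
  coalSize_eq := coalSize_optionElim π₀ c
  rel_base
    | none, j => htrans none (hSPAO none c _ _ (lt_add_one _)) (hc j)
    | some a, j => hπ₀.rel_succ (fun a => hSPAO (some a)) a j
  rel_settled i hi j := by
    rw [Finset.mem_singleton.mp hi]
    exact hc j

end

/-- A Nash stable partition `π0` is established on agent set `A`; a new agent
(the `none` element of `Option A`) with SPAO preferences joins, choosing its most preferred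
task-coalition pair `jstar`.  The enlarged instance is still SPAO, admits a Nash stable
partition, and greedy unilateral deviations starting from the resulting partition re-converge
to a Nash stable partition within at most `|A| + 1` iterations. -/
theorem new_agent_reconvergence
    {A τ : Type*} [Fintype A] [DecidableEq A] [Fintype τ] [DecidableEq τ]
    (R : Option A → τ × ℕ → τ × ℕ → Prop)
    (htotal : ∀ i x y, R i x y ∨ R i y x)
    (htrans : ∀ i, Transitive (R i))
    (hSPAO : ∀ (i : Option A) (t : τ) (p1 p2 : ℕ), p1 < p2 → R i (t, p1) (t, p2))
    (π0 : A → τ)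
    (hNash0 : ∀ (i : A) (j : τ),
      R (some i) (π0 i, coalSize π0 (π0 i)) (j, joinSize π0 i j))
    (jstar : τ)
    (hbest : ∀ j : τ, R none (jstar, coalSize π0 jstar + 1) (j, coalSize π0 j + 1)) :
    (∀ (i : Option A) (t : τ) (p1 p2 : ℕ), p1 < p2 → R i (t, p1) (t, p2)) ∧
    (∃ π : Option A → τ, NashStable R π) ∧
    (∀ seq : ℕ → Option A → τ,
      seq 0 = (fun x => Option.elim x jstar π0) →
      (∀ k, (¬ NashStable R (seq k) → GreedyStep R (seq k) (seq (k + 1))) ∧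
            (NashStable R (seq k) → seq (k + 1) = seq k)) →
      NashStable R (seq (Fintype.card A + 1))) := by
  have hinit := NashStable.deviationInvariant_optionElim htrans hSPAO hNash0 hbest
  have hconverge : ∀ seq : ℕ → Option A → τ, seq 0 = (fun x => Option.elim x jstar π0) →
      GreedyRun R seq → NashStable R (seq (Fintype.card A + 1)) := by
    intro seq h0 hrun
    refine (h0 ▸ hinit).nashStable_of_greedyRun htotal htrans hSPAO hrun ?_
    simp
  obtain ⟨seq, h0, hrun⟩ := exists_greedyRun htotal htrans fun x => Option.elim x jstar π0
  exact ⟨hSPAO, ⟨_, hconverge seq h0 hrun⟩, hconverge⟩
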